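/- Let d ≥ 2 and let J, J' ⊆ {1,…,n} with |J| + |J'| = n + 1, so that dim W_J + dim W_{J'} = dim Z. Then the intersection number of [W_J] and [W_{J'}] in the closed oriented manifold Z satisfies: [W_J]·[W_{J'}] = ±1 if |J ∩ J'| = 1, and [W_J]·[W_{J'}] = 0 if |J ∩ J'| > 1 and n ∈ J ∪ J'. In particular, if n ∈ J ∩ J' then [W_J]·[W_{J'}] = ±1 when J ∩ J' = {n} and 0 otherwise. -/

import Mathlib

noncomputable section ChainSpaces

open scoped BigOperators

/-! ### Basic geometric definitions: chain spaces, length vectors, short/long subsets -/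

/-- The first standard basis vector `e₁` of `ℝ^d`. -/
def e1 (d : ℕ) : EuclideanSpace ℝ (Fin d) :=
  WithLp.toLp 2 (fun j : Fin d => if (j : ℕ) = 0 then 1 else 0)

/-- A length vector is positive. -/
def LengthVectorPos {m : ℕ} (ℓ : Fin m → ℝ) : Prop := ∀ i, 0 < ℓ i

/-- `J ⊆ {1,…,m}` is `ℓ`-short. -/
def IsShort {m : ℕ} (ℓ : Fin m → ℝ) (J : Finset (Fin m)) : Prop :=
  ∑ i ∈ J, ℓ i < ∑ i ∈ Jᶜ, ℓ i

/-- `J ⊆ {1,…,m}` is `ℓ`-long. -/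
def IsLong {m : ℕ} (ℓ : Fin m → ℝ) (J : Finset (Fin m)) : Prop :=
  ∑ i ∈ Jᶜ, ℓ i < ∑ i ∈ J, ℓ i

/-- `ℓ` is generic: no subset has exactly half of the total length. -/
def IsGeneric {m : ℕ} (ℓ : Fin m → ℝ) : Prop :=
  ∀ J : Finset (Fin m), ∑ i ∈ J, ℓ i ≠ ∑ i ∈ Jᶜ, ℓ i

/-- `ℓ = (ℓ₁,…,ℓ_n)` is dominated: the last entry is maximal.
(Here the length vector is indexed by `Fin (n+1)`, so the paper's `n` is `n+1`.) -/
def IsDominated {n : ℕ} (ℓ : Fin (n + 1) → ℝ) : Prop :=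
  ∀ i, ℓ i ≤ ℓ (Fin.last n)

/-- The chain space `Ch_d^{n+1}(ℓ) ⊆ (S^{d-1})^n` of configurations
`z` of unit vectors with `∑_{i=1}^{n} ℓᵢ zᵢ = ℓ_{n+1} e₁`.
(The paper's `n` is our `n+1`: there are `n` moving segments.) -/
def chainSpace (d n : ℕ) (ℓ : Fin (n + 1) → ℝ) :
    Set (Fin n → EuclideanSpace ℝ (Fin d)) :=
  {z | (∀ i, ‖z i‖ = 1) ∧
       ∑ i : Fin n, ℓ i.castSucc • z i = ℓ (Fin.last n) • e1 d}

/-- The space `Z = Z_d^{n+1} = {ρ : {1,…,n+1} → S^{d-1} ∣ ρ(n+1) = -e₁}`. -/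
def Zspace (d n : ℕ) : Set (Fin (n + 1) → EuclideanSpace ℝ (Fin d)) :=
  {ρ | (∀ i, ‖ρ i‖ = 1) ∧ ρ (Fin.last n) = -(e1 d)}

/-- The chain space viewed inside `Z`: configurations `ρ ∈ Z` with `∑ ℓᵢ ρ(i) = 0`. -/
def chainInZ (d n : ℕ) (ℓ : Fin (n + 1) → ℝ) :
    Set (Fin (n + 1) → EuclideanSpace ℝ (Fin d)) :=
  {ρ ∈ Zspace d n | ∑ i, ℓ i • ρ i = 0}

/-- `Z' = Z ∖ Ch_d^{n+1}(ℓ)`. -/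
def Zprime (d n : ℕ) (ℓ : Fin (n + 1) → ℝ) :
    Set (Fin (n + 1) → EuclideanSpace ℝ (Fin d)) :=
  Zspace d n \ chainInZ d n ℓ

/-- The submanifold `W_J = {ρ ∈ Z ∣ ρ is constant on J}`. -/
def Wsub (d n : ℕ) (J : Finset (Fin (n + 1))) :
    Set (Fin (n + 1) → EuclideanSpace ℝ (Fin d)) :=
  {ρ ∈ Zspace d n | ∀ i ∈ J, ∀ j ∈ J, ρ i = ρ j}

/-- The lined configuration `ρ_J ∈ Z` (taking the value `κ_J(i)e₁` if `n ∈ J` and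
`-κ_J(i)e₁` if `n ∉ J`, where `κ_J = -1` on `J` and `1` off `J`). -/
def rhoConfig (d n : ℕ) (J : Finset (Fin (n + 1))) :
    Fin (n + 1) → EuclideanSpace ℝ (Fin d) :=
  fun i => if (Fin.last n ∈ J) = (i ∈ J) then -(e1 d) else e1 d

/-- The manifold `V_d(ℓ) = {ρ ∈ Z ∣ ∑_{i≤n} ℓᵢ ρ(i) = t e₁ with t ≥ ℓ_{n+1}}`. -/
def Vspace (d n : ℕ) (ℓ : Fin (n + 1) → ℝ) :
    Set (Fin (n + 1) → EuclideanSpace ℝ (Fin d)) :=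
  {ρ ∈ Zspace d n | ∃ t : ℝ, ℓ (Fin.last n) ≤ t ∧
    ∑ i : Fin n, ℓ i.castSucc • ρ i.castSucc = t • e1 d}

/-- A subset `J ⊆ {1,…,n}` (not containing the last index) viewed in `Fin (n+1)`. -/
def liftFinset (n : ℕ) (J : Finset (Fin n)) : Finset (Fin (n + 1)) :=
  J.map Fin.castSuccEmb

/-- `J ∈ S_{⟨n+1⟩}(ℓ)`, i.e. `J ⊆ {1,…,n}` and `J ∪ {n+1}` is `ℓ`-short. -/
def memShortCone {n : ℕ} (ℓ : Fin (n + 1) → ℝ) (J : Finset (Fin n)) : Prop :=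
  IsShort ℓ (insert (Fin.last n) (liftFinset n J))

/-- The submanifold `R_d(J) = {ρ ∈ Z ∣ ρ(i) = e₁ for i ∉ J}`, for `J ⊆ {1,…,n}`. -/
def Rsub (d n : ℕ) (J : Finset (Fin n)) :
    Set (Fin (n + 1) → EuclideanSpace ℝ (Fin d)) :=
  {ρ ∈ Zspace d n | ∀ i : Fin n, i ∉ J → ρ i.castSucc = e1 d}

/-- The space `R_d(ℓ) = ⋃_{J ∈ S_{⟨n+1⟩}(ℓ)} R_d(J)`. -/
def Rspace (d n : ℕ) (ℓ : Fin (n + 1) → ℝ) :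
    Set (Fin (n + 1) → EuclideanSpace ℝ (Fin d)) :=
  ⋃ J ∈ {J : Finset (Fin n) | memShortCone ℓ J}, Rsub d n J

/-- `a_k(ℓ)`: the number of `ℓ`-short subsets `J` containing the last index with
`|J| = k + 1`; equivalently the number of `J ∈ S_{⟨n+1⟩}(ℓ)` with `|J| = k`. -/
def shortCount {n : ℕ} (ℓ : Fin (n + 1) → ℝ) (k : ℕ) : ℕ :=
  (@Finset.filter _
    (fun J : Finset (Fin (n + 1)) =>
      IsShort ℓ J ∧ Fin.last n ∈ J ∧ J.card = k + 1)
    (Classical.decPred _) Finset.univ).card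

/-! ### The subgroup of `O(d)` stabilising the first axis, and its action -/

/-- The action of a `d × d`-matrix on `ℝ^d`. -/
def matVec {d : ℕ} (γ : Matrix (Fin d) (Fin d) ℝ) (v : EuclideanSpace ℝ (Fin d)) :
    EuclideanSpace ℝ (Fin d) := WithLp.toLp 2 (γ.mulVec v)

/-- The copy of `O(d-1)` inside `O(d)`: orthogonal matrices fixing `e₁`. -/
def OStab (d : ℕ) : Set (Matrix (Fin d) (Fin d) ℝ) :=
  {γ | γ ∈ Matrix.orthogonalGroup (Fin d) ℝ ∧ matVec γ (e1 d) = e1 d}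

/-- The (diagonal) action of a matrix on configurations. -/
def matAct {d m : ℕ} (γ : Matrix (Fin d) (Fin d) ℝ)
    (z : Fin m → EuclideanSpace ℝ (Fin d)) : Fin m → EuclideanSpace ℝ (Fin d) :=
  fun i => matVec γ (z i)

/-! ### Smooth maps between subsets of normed spaces, and (equivariant) diffeomorphisms

A map between subsets of real normed vector spaces is *smooth* if around the source
set it extends to a `C^∞` map of the ambient spaces.  For embedded submanifolds of
euclidean spaces (such as all spaces occurring in this paper) this is the usual
notion of a smooth map, and bijections which are smooth in both directions are
exactly diffeomorphisms. -/

/-- `f : s → t` is smooth in the submanifold sense. -/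
def IsSmoothSubsetMap {E F : Type*} [NormedAddCommGroup E] [NormedSpace ℝ E]
    [NormedAddCommGroup F] [NormedSpace ℝ F] (s : Set E) (t : Set F)
    (f : s → t) : Prop :=
  ∃ (U : Set E) (g : E → F), IsOpen U ∧ s ⊆ U ∧ ContDiffOn ℝ (⊤ : ℕ∞) g U ∧
    ∀ x : s, g x = (f x : F)

/-- Two subsets of normed spaces are diffeomorphic (as submanifolds). -/
def IsDiffeomorphic {E F : Type*} [NormedAddCommGroup E] [NormedSpace ℝ E]
    [NormedAddCommGroup F] [NormedSpace ℝ F] (s : Set E) (t : Set F) : Prop :=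
  ∃ e : s ≃ t, IsSmoothSubsetMap s t e ∧ IsSmoothSubsetMap t s e.symm

/-- Two subsets of `(ℝ^d)^m` are `O(d-1)`-equivariantly diffeomorphic: there is a
diffeomorphism commuting with the coordinatewise action of the subgroup of `O(d)`
stabilising the first axis. -/
def IsEquivariantlyDiffeomorphic (d m : ℕ)
    (s t : Set (Fin m → EuclideanSpace ℝ (Fin d))) : Prop :=
  ∃ e : s ≃ t, IsSmoothSubsetMap s t e ∧ IsSmoothSubsetMap t s e.symm ∧
    ∀ γ ∈ OStab d, ∀ x y : s, (y : Fin m → EuclideanSpace ℝ (Fin d)) = matAct γ x →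
      (e y : Fin m → EuclideanSpace ℝ (Fin d)) = matAct γ (e x)

end ChainSpaces

noncomputable section Morse

/-- `f` restricted to `s` has a nondegenerate critical point of index `lam` at `p`,
in the sense of the Morse lemma: there is a smooth chart of `s` around `p`
(smooth as a map of submanifolds, i.e. with a smooth ambient local inverse) in which
`f` becomes `f p - x₁² - ⋯ - x_lam² + x_{lam+1}² + ⋯ + x_m²`. -/
def HasMorseChartAt {A : Type*} [NormedAddCommGroup A] [NormedSpace ℝ A]
    (s : Set A) (f : A → ℝ) (p : A) (m lam : ℕ) : Prop :=
  ∃ (V : Set (EuclideanSpace ℝ (Fin m))) (U : Set A)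
    (ψ : EuclideanSpace ℝ (Fin m) → A) (χ : A → EuclideanSpace ℝ (Fin m)),
    IsOpen V ∧ (0 : EuclideanSpace ℝ (Fin m)) ∈ V ∧ IsOpen U ∧ p ∈ U ∧
    ContDiffOn ℝ (⊤ : ℕ∞) ψ V ∧ ContDiffOn ℝ (⊤ : ℕ∞) χ U ∧
    ψ 0 = p ∧ ψ '' V = s ∩ U ∧ (∀ x ∈ V, χ (ψ x) = x) ∧
    ∀ x ∈ V, f (ψ x) =
      f p + ∑ i : Fin m, (if (i : ℕ) < lam then -1 else 1) * (x i) ^ 2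

end Morse

noncomputable section Singular

open scoped BigOperators

/-! ### Singular homology and cohomology

We set up singular (co)homology of a topological space with coefficients in a
commutative ring from scratch, together with the cup product on cochains
(via the front/back face formula), pullbacks and pushforwards, and the Kronecker
pairing. -/

/-- The topological standard `k`-simplex. -/
abbrev TopSimplex (k : ℕ) : Type := (stdSimplex ℝ (Fin (k + 1)) : Set (Fin (k + 1) → ℝ))

/-- Singular `k`-simplices of `X`. -/
abbrev SingularSimplex (X : Type*) [TopologicalSpace X] (k : ℕ) := C(TopSimplex k, X)

/-- Singular `k`-chains with coefficients in `R`. -/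
abbrev SingularChain (X : Type*) [TopologicalSpace X] (R : Type*) [CommRing R] (k : ℕ) :=
  SingularSimplex X k →₀ R

/-- Singular `k`-cochains with coefficients in `R`. -/
abbrev SingularCochain (X : Type*) [TopologicalSpace X] (R : Type*) [CommRing R] (k : ℕ) :=
  SingularSimplex X k → R

/-- The affine map `Δ^a → Δ^b` induced by a map `g` on vertices. -/
def affineSimplexMap {a b : ℕ} (g : Fin (a + 1) → Fin (b + 1)) :
    C(TopSimplex a, TopSimplex b) where
  toFun x := ⟨fun j => ∑ l ∈ Finset.univ.filter (fun l : Fin (a + 1) => g l = j),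
      (x : Fin (a + 1) → ℝ) l, by
    constructor
    · intro j
      exact Finset.sum_nonneg fun l _ => x.2.1 l
    · rw [Finset.sum_fiberwise Finset.univ g (fun l => (x : Fin (a + 1) → ℝ) l)]
      exact x.2.2⟩
  continuous_toFun := by
    apply Continuous.subtype_mk
    apply continuous_pi
    intro j
    exact continuous_finset_sum _ fun l _ => (continuous_apply l).comp continuous_subtype_val

/-- The `i`-th face inclusion `Δ^k → Δ^{k+1}`. -/
def faceIncl (k : ℕ) (i : Fin (k + 2)) : C(TopSimplex k, TopSimplex (k + 1)) :=
  affineSimplexMap i.succAbove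

/-- The front face inclusion `Δ^p → Δ^{p+q}` (onto the first `p+1` vertices). -/
def frontIncl (p q : ℕ) : C(TopSimplex p, TopSimplex (p + q)) :=
  affineSimplexMap (fun l : Fin (p + 1) => (⟨(l : ℕ), by omega⟩ : Fin (p + q + 1)))

/-- The back face inclusion `Δ^q → Δ^{p+q}` (onto the last `q+1` vertices). -/
def backIncl (p q : ℕ) : C(TopSimplex q, TopSimplex (p + q)) :=
  affineSimplexMap (fun l : Fin (q + 1) => (⟨p + (l : ℕ), by omega⟩ : Fin (p + q + 1)))

variable {X Y : Type*} [TopologicalSpace X] [TopologicalSpace Y]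
variable {R : Type*} [CommRing R]

/-- The boundary operator on singular chains. -/
def boundaryOp (X : Type*) [TopologicalSpace X] (R : Type*) [CommRing R] (k : ℕ) :
    SingularChain X R (k + 1) →+ SingularChain X R k :=
  Finsupp.liftAddHom (fun σ : SingularSimplex X (k + 1) =>
    ∑ i : Fin (k + 2),
      (Finsupp.singleAddHom (σ.comp (faceIncl k i))).comp
        (AddMonoidHom.mulLeft ((-1 : R) ^ (i : ℕ))))

/-- The cycles: kernel of the boundary (everything in degree `0`). -/
def cyclesSubgroup (X : Type*) [TopologicalSpace X] (R : Type*) [CommRing R] :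
    (k : ℕ) → AddSubgroup (SingularChain X R k)
  | 0 => ⊤
  | (m + 1) => (boundaryOp X R m).ker

/-- The boundaries: range of the boundary operator. -/
def boundariesSubgroup (X : Type*) [TopologicalSpace X] (R : Type*) [CommRing R] (k : ℕ) :
    AddSubgroup (SingularChain X R k) :=
  (boundaryOp X R k).range

/-- Singular homology `H_k(X; R)`, as the quotient of the cycles by the
boundaries lying in it. -/
def SingularHomology (X : Type*) [TopologicalSpace X] (R : Type*) [CommRing R] (k : ℕ) :=
  cyclesSubgroup X R k ⧸
    ((boundariesSubgroup X R k).comap (cyclesSubgroup X R k).subtype)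

instance (k : ℕ) : AddCommGroup (SingularHomology X R k) := by
  unfold SingularHomology; infer_instance

/-- The homology class of a cycle. -/
def homologyClass {k : ℕ} (z : cyclesSubgroup X R k) : SingularHomology X R k :=
  QuotientAddGroup.mk' _ z

/-- Pushforward of singular chains along a continuous map. -/
def chainPushforward (f : C(X, Y)) (R : Type*) [CommRing R] (k : ℕ) :
    SingularChain X R k →+ SingularChain Y R k :=
  Finsupp.mapDomain.addMonoidHom (fun σ : SingularSimplex X k => f.comp σ)

/-- The coboundary operator on singular cochains. -/
def coboundaryOp (X : Type*) [TopologicalSpace X] (R : Type*) [CommRing R] (k : ℕ) :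
    SingularCochain X R k →+ SingularCochain X R (k + 1) :=
  AddMonoidHom.mk'
    (fun a => fun σ : SingularSimplex X (k + 1) =>
      ∑ i : Fin (k + 2), (-1 : R) ^ (i : ℕ) * a (σ.comp (faceIncl k i)))
    (by
      intro a b
      funext σ
      simp [Pi.add_apply, mul_add, Finset.sum_add_distrib])

/-- The cocycles: kernel of the coboundary operator. -/
def cocyclesSubgroup (X : Type*) [TopologicalSpace X] (R : Type*) [CommRing R] (k : ℕ) :
    AddSubgroup (SingularCochain X R k) :=
  (coboundaryOp X R k).ker

/-- The coboundaries (`0` in degree zero). -/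
def coboundariesSubgroup (X : Type*) [TopologicalSpace X] (R : Type*) [CommRing R] :
    (k : ℕ) → AddSubgroup (SingularCochain X R k)
  | 0 => ⊥
  | (m + 1) => (coboundaryOp X R m).range

/-- `a` is a coboundary. -/
def IsCoboundary {X : Type*} [TopologicalSpace X] {R : Type*} [CommRing R] {k : ℕ}
    (a : SingularCochain X R k) : Prop :=
  a ∈ coboundariesSubgroup X R k

/-- Singular cohomology `H^k(X; R)`, as the quotient of the cocycles by the
coboundaries lying in it. -/
def SingularCohomology (X : Type*) [TopologicalSpace X] (R : Type*) [CommRing R] (k : ℕ) :=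
  cocyclesSubgroup X R k ⧸
    ((coboundariesSubgroup X R k).comap (cocyclesSubgroup X R k).subtype)

instance (k : ℕ) : AddCommGroup (SingularCohomology X R k) := by
  unfold SingularCohomology; infer_instance

/-- The cohomology class of a cocycle. -/
def cohomologyClass {k : ℕ} (a : cocyclesSubgroup X R k) : SingularCohomology X R k :=
  QuotientAddGroup.mk' _ a

/-- The cup product of singular cochains, given by the usual front/back face
formula `(a ⌣ b)(σ) = a(σ|front) * b(σ|back)`. -/
def cupProduct {p q : ℕ} (a : SingularCochain X R p) (b : SingularCochain X R q) :
    SingularCochain X R (p + q) :=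
  fun σ => a (σ.comp (frontIncl p q)) * b (σ.comp (backIncl p q))

/-- Pullback of singular cochains along a continuous map. -/
def cochainPullback (f : C(X, Y)) {R : Type*} [CommRing R] {k : ℕ}
    (a : SingularCochain Y R k) : SingularCochain X R k :=
  fun σ => a (f.comp σ)

/-- The Kronecker pairing between cochains and chains. -/
def kroneckerPairing {k : ℕ} (a : SingularCochain X R k) (c : SingularChain X R k) : R :=
  c.sum fun σ r => r * a σ

/-- Transport of cochains along an equality of degrees. -/
def cochainCast {p q : ℕ} (h : p = q) (a : SingularCochain X R p) :
    SingularCochain X R q := h ▸ a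

/-- Transport of cohomology along an equality of degrees. -/
def cohomologyCast {p q : ℕ} (h : p = q) (y : SingularCohomology X R p) :
    SingularCohomology X R q := h ▸ y

/-- Transport of homology along an equality of degrees. -/
def homologyCast {p q : ℕ} (h : p = q) (y : SingularHomology X R p) :
    SingularHomology X R q := h ▸ y

/-- The unit cochain. -/
def oneCochain (X : Type*) [TopologicalSpace X] (R : Type*) [CommRing R] :
    SingularCochain X R 0 := fun _ => (1 : R)

/-- Iterated cup product of a list of `r`-dimensional cochains. -/
def cupList {r : ℕ} {ι : Type*} (ξ : ι → SingularCochain X R r) :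
    (l : List ι) → SingularCochain X R (r * l.length)
  | [] => cochainCast (by simp) (oneCochain X R)
  | (i :: t) => cochainCast (by simp [Nat.mul_add, Nat.mul_succ]; ring)
      (cupProduct (ξ i) (cupList ξ t))

/-- The cup-product monomial indexed by a finite set `J` (in increasing order). -/
def cupMonomial {r : ℕ} {m : ℕ} (ξ : Fin m → SingularCochain X R r)
    (J : Finset (Fin m)) : SingularCochain X R (r * J.card) :=
  cochainCast (by rw [Finset.length_sort]) (cupList ξ (J.sort (· ≤ ·)))

/-- The continuous inclusion map between subspaces. -/
def inclusionMap {Z : Type*} [TopologicalSpace Z] {s t : Set Z} (h : s ⊆ t) :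
    C(s, t) := ⟨Set.inclusion h, continuous_inclusion h⟩

/-- The continuous map of a subspace into the whole space. -/
def subtypeMap {Z : Type*} [TopologicalSpace Z] (s : Set Z) : C(s, Z) :=
  ⟨Subtype.val, continuous_subtype_val⟩

/-- `y ∈ H_k(X; R)` is the image of a fundamental class of the subspace `W ⊆ X`:
it is the pushforward of a cycle of `W` whose homology class generates
`H_k(W; R)`. -/
def IsSubspaceFundamentalClass {Z : Type*} [TopologicalSpace Z] {X : Set Z}
    (R : Type*) [CommRing R] (W : Set Z) (hW : W ⊆ X) (k : ℕ)
    (y : SingularHomology X R k) : Prop :=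
  ∃ z : cyclesSubgroup W R k,
    (∀ u : SingularHomology W R k, u ∈ AddSubgroup.zmultiples (homologyClass z)) ∧
    ∃ z' : cyclesSubgroup X R k,
      (z' : SingularChain X R k) =
        chainPushforward (inclusionMap hW) R k (z : SingularChain W R k) ∧
      y = homologyClass z'

end Singular


namespace IntAux

/-- Rotation by angle `θ` in the plane of the first two coordinates. -/
noncomputable def rot (d : ℕ) (θ : ℝ) (v : EuclideanSpace ℝ (Fin d)) : EuclideanSpace ℝ (Fin d) :=
  WithLp.toLp 2 (fun j : Fin d => if (j : ℕ) = 0 then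
      Real.cos θ * v j - Real.sin θ * (if h : 1 < d then v ⟨1, h⟩ else 0)
    else if (j : ℕ) = 1 then
      Real.sin θ * (if h : 0 < d then v ⟨0, h⟩ else 0) + Real.cos θ * v j
    else v j)

lemma rot_zero (d : ℕ) (v : EuclideanSpace ℝ (Fin d)) : rot d 0 v = v := by
  ext j
  unfold rot
  split_ifs with h1 h2 <;> simp_all [Fin.ext_iff]

lemma rot_norm {d : ℕ} (hd : 2 ≤ d) (θ : ℝ) (v : EuclideanSpace ℝ (Fin d)) :
    ‖rot d θ v‖ = ‖v‖ := by
  have h0 : (0:ℕ) < d := by omega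
  have h1 : (1:ℕ) < d := by omega
  set i0 : Fin d := ⟨0, h0⟩ with hi0
  set i1 : Fin d := ⟨1, h1⟩ with hi1
  have hne : i1 ≠ i0 := by simp [hi0, hi1, Fin.ext_iff]
  rw [EuclideanSpace.norm_eq, EuclideanSpace.norm_eq]
  congr 1
  have key : ∀ f : Fin d → ℝ, ∑ j, f j
      = (∑ j ∈ (Finset.univ.erase i0).erase i1, f j + f i1) + f i0 := by
    intro f
    rw [Finset.sum_erase_add _ _ (Finset.mem_erase.mpr ⟨hne, Finset.mem_univ i1⟩),
      Finset.sum_erase_add _ _ (Finset.mem_univ i0)]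
  rw [key (fun j => ‖rot d θ v j‖ ^ 2), key (fun j => ‖v j‖ ^ 2)]
  have hrest : ∀ j ∈ (Finset.univ.erase i0).erase i1, ‖rot d θ v j‖ ^ 2 = ‖v j‖ ^ 2 := by
    intro j hj
    have hj1 : j ≠ i1 := (Finset.mem_erase.mp hj).1
    have hj0 : j ≠ i0 := (Finset.mem_erase.mp (Finset.mem_erase.mp hj).2).1
    have hj0' : (j : ℕ) ≠ 0 := fun h => hj0 (Fin.ext h)
    have hj1' : (j : ℕ) ≠ 1 := fun h => hj1 (Fin.ext h)
    simp [rot, hj0', hj1']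
  rw [Finset.sum_congr rfl hrest]
  have e0 : rot d θ v i0 = Real.cos θ * v i0 - Real.sin θ * v i1 := by
    simp [rot, hi0, h1, hi1]
  have e1' : rot d θ v i1 = Real.sin θ * v i0 + Real.cos θ * v i1 := by
    simp [rot, hi1, h0, hi0]
  rw [e0, e1']
  have := Real.sin_sq_add_cos_sq θ
  simp only [Real.norm_eq_abs, sq_abs]
  nlinarith [this]

lemma rot_pi_neg_e1 {d : ℕ} (hd : 2 ≤ d) : rot d Real.pi (-(e1 d)) = e1 d := by
  ext j
  have hneg : (-(e1 d)) j = -(e1 d j) := rfl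
  by_cases hj0 : (j : ℕ) = 0
  · simp [rot, hj0, e1, hneg]
  · by_cases hj1 : (j : ℕ) = 1
    · simp [rot, hj0, hj1, e1, hneg]
    · simp [rot, hj0, hj1, e1, hneg]

lemma e1_norm {d : ℕ} (hd : 2 ≤ d) : ‖e1 d‖ = 1 := by
  have : e1 d = EuclideanSpace.single (⟨0, by omega⟩ : Fin d) (1:ℝ) := by
    ext j; simp [e1, EuclideanSpace.single_apply, Fin.ext_iff, eq_comm]
  rw [this, EuclideanSpace.norm_single]; norm_num

lemma e1_ne_neg {d : ℕ} (hd : 2 ≤ d) : e1 d ≠ -(e1 d) := by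
  intro h
  have := congr_arg (fun w : EuclideanSpace ℝ (Fin d) => w ⟨0, by omega⟩) h
  simp [e1] at this
  norm_num at this

lemma rot_cont (d : ℕ) :
    Continuous fun p : ℝ × EuclideanSpace ℝ (Fin d) => rot d p.1 p.2 := by
  unfold rot
  apply (PiLp.continuous_toLp 2 _).comp
  apply continuous_pi
  intro j
  by_cases hj0 : (j : ℕ) = 0
  · simp only [hj0, if_pos]
    apply Continuous.sub
    · exact (Real.continuous_cos.comp continuous_fst).mul
        ((continuous_apply j).comp ((PiLp.continuous_ofLp 2 _).comp continuous_snd))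
    · exact (Real.continuous_sin.comp continuous_fst).mul (by
        split_ifs with h
        · exact (continuous_apply _).comp ((PiLp.continuous_ofLp 2 _).comp continuous_snd)
        · exact continuous_const)
  · by_cases hj1 : (j : ℕ) = 1
    · simp only [hj0, hj1, if_neg, if_pos, if_false]
      apply Continuous.add
      · exact (Real.continuous_sin.comp continuous_fst).mul (by
          split_ifs with h
          · exact (continuous_apply _).comp ((PiLp.continuous_ofLp 2 _).comp continuous_snd)
          · exact continuous_const)
      · exact (Real.continuous_cos.comp continuous_fst).mul
          ((continuous_apply j).comp ((PiLp.continuous_ofLp 2 _).comp continuous_snd))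
    · simp only [hj0, hj1, if_false]
      exact (continuous_apply j).comp ((PiLp.continuous_ofLp 2 _).comp continuous_snd)

attribute [irreducible] rot

/-- The self-map of configurations rotating the `i0`-th coordinate by `θ`. -/
noncomputable def moveFun (d n : ℕ) (i0 : Fin (n + 1)) (θ : ℝ)
    (ρ : Fin (n + 1) → EuclideanSpace ℝ (Fin d)) :
    Fin (n + 1) → EuclideanSpace ℝ (Fin d) :=
  fun i => if i = i0 then rot d θ (ρ i0) else ρ i

lemma moveFun_zero (d n : ℕ) (i0 : Fin (n + 1))
    (ρ : Fin (n + 1) → EuclideanSpace ℝ (Fin d)) : moveFun d n i0 0 ρ = ρ := by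
  funext i
  unfold moveFun
  split_ifs with h
  · rw [rot_zero, h]
  · rfl

lemma moveFun_mem {d n : ℕ} (hd : 2 ≤ d) {i0 : Fin (n + 1)} (hi0 : i0 ≠ Fin.last n)
    (θ : ℝ) {ρ : Fin (n + 1) → EuclideanSpace ℝ (Fin d)} (hρ : ρ ∈ Zspace d n) :
    moveFun d n i0 θ ρ ∈ Zspace d n := by
  obtain ⟨h1, h2⟩ := hρ
  refine ⟨fun i => ?_, ?_⟩
  · by_cases h : i = i0
    · simp only [moveFun, if_pos h]
      rw [rot_norm hd]
      exact h1 i0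
    · simp only [moveFun, if_neg h]
      exact h1 i
  · have hl : Fin.last n ≠ i0 := fun he => hi0 he.symm
    simp only [moveFun, if_neg hl]
    exact h2

set_option maxHeartbeats 1000000 in
lemma moveFun_cont (d n : ℕ) (i0 : Fin (n + 1)) :
    Continuous fun p : ℝ × (Fin (n + 1) → EuclideanSpace ℝ (Fin d)) =>
      moveFun d n i0 p.1 p.2 := by
  have c1 : Continuous fun p : ℝ × (Fin (n + 1) → EuclideanSpace ℝ (Fin d)) =>
      rot d p.1 (p.2 i0) :=
    (rot_cont d).comp (continuous_fst.prodMk ((continuous_apply i0).comp continuous_snd))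
  have c2 : Continuous fun p : ℝ × (Fin (n + 1) → EuclideanSpace ℝ (Fin d)) =>
      Function.update p.2 i0 (rot d p.1 (p.2 i0)) := continuous_snd.update i0 c1
  have heq : (fun p : ℝ × (Fin (n + 1) → EuclideanSpace ℝ (Fin d)) =>
      moveFun d n i0 p.1 p.2)
      = fun p => Function.update p.2 i0 (rot d p.1 (p.2 i0)) := by
    funext p j
    rw [Function.update_apply]
    rfl
  rw [heq]
  exact c2


set_option maxHeartbeats 1000000 in
lemma moveP_cont (d n : ℕ) (i0 : Fin (n + 1)) :
    Continuous fun x : ↥(Zspace d n) => moveFun d n i0 Real.pi x.1 :=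
  (moveFun_cont d n i0).comp (continuous_const.prodMk continuous_subtype_val)

set_option maxHeartbeats 1000000 in
lemma moveH_cont (d n : ℕ) (i0 : Fin (n + 1)) :
    Continuous fun p : ↑unitInterval × ↥(Zspace d n) =>
      moveFun d n i0 ((1 - (p.1 : ℝ)) * Real.pi) p.2.1 :=
  (moveFun_cont d n i0).comp
    (((continuous_const.sub (continuous_subtype_val.comp continuous_fst)).mul
      continuous_const).prodMk (continuous_subtype_val.comp continuous_snd))

end IntAux

noncomputable section Statement
open scoped RealInnerProductSpace

/-- `v` is tangent to `Z = Z_d^n` at `ρ ∈ Z`. -/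
def TangentZ (d n : ℕ) (ρ v : Fin (n + 1) → EuclideanSpace ℝ (Fin d)) : Prop :=
  (∀ i, ⟪v i, ρ i⟫ = 0) ∧ v (Fin.last n) = 0

/-- `v` is tangent to `W_J ⊆ Z` at `ρ ∈ W_J`. -/
def TangentW (d n : ℕ) (J : Finset (Fin (n + 1)))
    (ρ v : Fin (n + 1) → EuclideanSpace ℝ (Fin d)) : Prop :=
  TangentZ d n ρ v ∧ ∀ i ∈ J, ∀ j ∈ J, v i = v j

/-! ## STATEMENT 10 (Lemma 1.5)

Let `d ≥ 2` and `J, J' ⊆ {1,…,n}` with `|J| + |J'| = n + 1`, so that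
`dim W_J + dim W_{J'} = dim Z`.  Then the intersection number satisfies
`[W_J]·[W_{J'}] = ±1` if `|J ∩ J'| = 1`, and `[W_J]·[W_{J'}] = 0` if
`|J ∩ J'| > 1` and `n ∈ J ∪ J'`; in particular for `n ∈ J ∩ J'` it is `±1` when
`J ∩ J' = {n}` and `0` otherwise.

Since no intersection theory is available, the two statements are rendered by their
defining geometric content (which is exactly what loc. cit. establishes):
* if `|J ∩ J'| = 1` then `W_J` and `W_{J'}` intersect transversally in the single
  point `ρ_{J ∪ J'}` (all of whose coordinates are `-e₁`), whence
  `[W_J]·[W_{J'}] = ±1`;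
* if `|J ∩ J'| > 1` and `n ∈ J ∪ J'`, then `W_J` can be moved off `W_{J'}` by a
  self-map of `Z` homotopic to the identity, whence `[W_J]·[W_{J'}] = 0`.
(The paper's `n` is `n+1` below, so `|J| + |J'| = n + 2`.) -/


open IntAux in

theorem intersection_numbers_of_W (d n : ℕ) (hd : 2 ≤ d)
    (J J' : Finset (Fin (n + 1))) (hcard : J.card + J'.card = n + 2) :
    ((J ∩ J').card = 1 →
      Wsub d n J ∩ Wsub d n J'
          = {(fun _ => -(e1 d) : Fin (n + 1) → EuclideanSpace ℝ (Fin d))} ∧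
      (∀ u : Fin (n + 1) → EuclideanSpace ℝ (Fin d),
        TangentZ d n (fun _ => -(e1 d)) u →
        ∃ v w : Fin (n + 1) → EuclideanSpace ℝ (Fin d),
          TangentW d n J (fun _ => -(e1 d)) v ∧
          TangentW d n J' (fun _ => -(e1 d)) w ∧ u = v + w)) ∧
    (1 < (J ∩ J').card → Fin.last n ∈ J ∪ J' →
      ∃ h : C(Zspace d n, Zspace d n),
        h.Homotopic (ContinuousMap.id (Zspace d n)) ∧
        ∀ x : Zspace d n,
          (x : Fin (n + 1) → EuclideanSpace ℝ (Fin d)) ∈ Wsub d n J →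
          ((h x : Zspace d n) : Fin (n + 1) → EuclideanSpace ℝ (Fin d))
            ∉ Wsub d n J') := by
  classical
  constructor
  · -- the case |J ∩ J'| = 1
    intro hc1
    obtain ⟨j0, hj0⟩ : ∃ j0, J ∩ J' = {j0} := Finset.card_eq_one.mp hc1
    have hj0m : j0 ∈ J ∩ J' := by rw [hj0]; exact Finset.mem_singleton_self j0
    have hj0J : j0 ∈ J := (Finset.mem_inter.mp hj0m).1
    have hj0J' : j0 ∈ J' := (Finset.mem_inter.mp hj0m).2
    have hmeminter : ∀ i, i ∈ J → i ∈ J' → i = j0 := fun i h1 h2 =>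
      Finset.mem_singleton.mp (hj0 ▸ Finset.mem_inter.mpr ⟨h1, h2⟩)
    have huniv : J ∪ J' = Finset.univ := by
      apply Finset.eq_univ_of_card
      have hcu := Finset.card_union_add_card_inter J J'
      rw [hj0, Finset.card_singleton] at hcu
      simp only [Fintype.card_fin]
      omega
    have hlast : Fin.last n ∈ J ∨ Fin.last n ∈ J' := by
      have := Finset.mem_univ (Fin.last n)
      rw [← huniv] at this
      exact Finset.mem_union.mp this
    have he1 : ‖e1 d‖ = 1 := e1_norm hd
    constructor
    · -- the intersection is the single lined configuration
      rw [Set.eq_singleton_iff_unique_mem]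
      constructor
      · exact ⟨⟨⟨fun i => by rw [norm_neg, he1], rfl⟩, fun i _ j _ => rfl⟩,
          ⟨⟨fun i => by rw [norm_neg, he1], rfl⟩, fun i _ j _ => rfl⟩⟩
      · rintro ρ ⟨⟨⟨hn, hl⟩, hJ⟩, ⟨-, hJ'⟩⟩
        have hconst : ∀ i, ρ i = ρ j0 := by
          intro i
          have hi : i ∈ J ∪ J' := huniv ▸ Finset.mem_univ i
          rcases Finset.mem_union.mp hi with h | h
          · exact hJ i h j0 hj0J
          · exact hJ' i h j0 hj0J'
        have hval : ρ j0 = -(e1 d) := by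
          rw [← hconst (Fin.last n)]
          exact hl
        funext i
        rw [hconst i, hval]
    · -- transversality: tangent spaces span
      intro u hu
      have hinner : ∀ i, ⟪u i, -(e1 d)⟫ = 0 := fun i => hu.1 i
      have hulast : u (Fin.last n) = 0 := hu.2
      by_cases hl' : Fin.last n ∈ J'
      · -- v is u j0 on J and u elsewhere
        refine ⟨fun i => if i ∈ J then u j0 else u i,
          fun i => u i - (if i ∈ J then u j0 else u i), ⟨⟨fun i => ?_, ?_⟩, ?_⟩,
          ⟨⟨fun i => ?_, ?_⟩, ?_⟩, ?_⟩
        · show ⟪(if i ∈ J then u j0 else u i), -(e1 d)⟫ = 0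
          split_ifs with h
          · exact hinner j0
          · exact hinner i
        · show (if Fin.last n ∈ J then u j0 else u (Fin.last n)) = 0
          split_ifs with h
          · have : Fin.last n = j0 := hmeminter _ h hl'
            rw [← this]; exact hulast
          · exact hulast
        · intro i hi j hj
          simp only [if_pos hi, if_pos hj]
        · show ⟪u i - (if i ∈ J then u j0 else u i), -(e1 d)⟫ = 0
          split_ifs with h
          · rw [inner_sub_left, hinner i, hinner j0, sub_zero]
          · rw [sub_self, inner_zero_left]
        · show u (Fin.last n) - (if Fin.last n ∈ J then u j0 else u (Fin.last n)) = 0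
          split_ifs with h
          · have : Fin.last n = j0 := hmeminter _ h hl'
            rw [← this, hulast, sub_self]
          · rw [sub_self]
        · intro i hi j hj
          have key : ∀ k, k ∈ J' → u k - (if k ∈ J then u j0 else u k) = 0 := by
            intro k hk
            split_ifs with h
            · rw [hmeminter k h hk, sub_self]
            · rw [sub_self]
          show u i - (if i ∈ J then u j0 else u i) = u j - (if j ∈ J then u j0 else u j)
          rw [key i hi, key j hj]
        · funext i
          show u i = (if i ∈ J then u j0 else u i) + (u i - (if i ∈ J then u j0 else u i))
          abel
      · -- last ∈ J; v is 0 on J and u - u j0 elsewhere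
        have hlJ : Fin.last n ∈ J := hlast.resolve_right hl'
        refine ⟨fun i => if i ∈ J then 0 else u i - u j0,
          fun i => u i - (if i ∈ J then 0 else u i - u j0), ⟨⟨fun i => ?_, ?_⟩, ?_⟩,
          ⟨⟨fun i => ?_, ?_⟩, ?_⟩, ?_⟩
        · show ⟪(if i ∈ J then 0 else u i - u j0), -(e1 d)⟫ = 0
          split_ifs with h
          · exact inner_zero_left _
          · rw [inner_sub_left, hinner i, hinner j0]
            norm_num
        · show (if Fin.last n ∈ J then (0:EuclideanSpace ℝ (Fin d)) else _) = 0
          rw [if_pos hlJ]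
        · intro i hi j hj
          simp only [if_pos hi, if_pos hj]
        · show ⟪u i - (if i ∈ J then 0 else u i - u j0), -(e1 d)⟫ = 0
          split_ifs with h
          · rw [sub_zero]
            exact hinner i
          · rw [inner_sub_left, inner_sub_left, hinner i, hinner j0]
            norm_num
        · show u (Fin.last n) - (if Fin.last n ∈ J then 0 else _) = 0
          rw [if_pos hlJ, hulast, sub_zero]
        · intro i hi j hj
          have key : ∀ k, k ∈ J' → u k - (if k ∈ J then 0 else u k - u j0) = u j0 := by
            intro k hk
            split_ifs with h
            · rw [hmeminter k h hk, sub_zero]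
            · abel
          show u i - (if i ∈ J then 0 else u i - u j0)
            = u j - (if j ∈ J then 0 else u j - u j0)
          rw [key i hi, key j hj]
        · funext i
          show u i = (if i ∈ J then 0 else u i - u j0) + (u i - (if i ∈ J then 0 else u i - u j0))
          abel
  · -- the case |J ∩ J'| > 1
    intro hc hlastmem
    obtain ⟨a, ha, b, hb, hab⟩ := Finset.one_lt_card.mp hc
    obtain ⟨i0, i1, hi0m, hi1m, hne, hi0last⟩ :
        ∃ i0 i1 : Fin (n + 1), i0 ∈ J ∩ J' ∧ i1 ∈ J ∩ J' ∧ i0 ≠ i1 ∧ i0 ≠ Fin.last n := by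
      by_cases h : a = Fin.last n
      · exact ⟨b, a, hb, ha, fun hh => hab hh.symm, fun hh => hab (hh.trans h.symm).symm⟩
      · exact ⟨a, b, ha, hb, hab, h⟩
    have hi0J : i0 ∈ J := (Finset.mem_inter.mp hi0m).1
    have hi0J' : i0 ∈ J' := (Finset.mem_inter.mp hi0m).2
    have hi1J : i1 ∈ J := (Finset.mem_inter.mp hi1m).1
    have hi1J' : i1 ∈ J' := (Finset.mem_inter.mp hi1m).2
    refine ⟨⟨fun x => ⟨moveFun d n i0 Real.pi x.1, moveFun_mem hd hi0last _ x.2⟩, ?_⟩,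
      ?_, ?_⟩
    · exact Continuous.subtype_mk (moveP_cont d n i0) _
    · -- homotopic to the identity
      refine ⟨⟨⟨fun p => ⟨moveFun d n i0 ((1 - (p.1 : ℝ)) * Real.pi) p.2.1,
          moveFun_mem hd hi0last _ p.2.2⟩, ?_⟩, ?_, ?_⟩⟩
      · exact Continuous.subtype_mk (moveH_cont d n i0) _
      · intro x
        apply Subtype.ext
        show moveFun d n i0 ((1 - ((0 : unitInterval) : ℝ)) * Real.pi) x.1
          = moveFun d n i0 Real.pi x.1
        norm_num
      · intro x
        apply Subtype.ext
        show moveFun d n i0 ((1 - ((1 : unitInterval) : ℝ)) * Real.pi) x.1 = x.1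
        have hθ : ((1:ℝ) - ((1 : unitInterval) : ℝ)) * Real.pi = 0 := by norm_num
        rw [hθ, moveFun_zero]
    · -- moves W_J off W_{J'}
      intro x hx hmem
      obtain ⟨hxZ, hxc⟩ := hx
      obtain ⟨-, hc'⟩ := hmem
      replace hc' : ∀ i ∈ J', ∀ j ∈ J',
          moveFun d n i0 Real.pi (x : Fin (n + 1) → EuclideanSpace ℝ (Fin d)) i
            = moveFun d n i0 Real.pi (x : Fin (n + 1) → EuclideanSpace ℝ (Fin d)) j := hc'
      have hmi1 : moveFun d n i0 Real.pi x.1 i1 = x.1 i1 :=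
        if_neg (fun h => hne h.symm)
      have hmi0 : moveFun d n i0 Real.pi x.1 i0 = rot d Real.pi (x.1 i0) := if_pos rfl
      have hmlast : moveFun d n i0 Real.pi x.1 (Fin.last n) = x.1 (Fin.last n) :=
        if_neg (fun h => hi0last h.symm)
      have heq1 : rot d Real.pi (x.1 i0) = x.1 i1 := by
        rw [← hmi0, ← hmi1]
        exact hc' i0 hi0J' i1 hi1J'
      have heq2 : x.1 i0 = x.1 i1 := hxc i0 hi0J i1 hi1J
      have hval : x.1 i1 = -(e1 d) := by
        rcases Finset.mem_union.mp hlastmem with hl | hl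
        · rw [hxc i1 hi1J (Fin.last n) hl]
          exact hxZ.2
        · have h2 := hc' i1 hi1J' (Fin.last n) hl
          rw [hmi1, hmlast] at h2
          rw [h2]
          exact hxZ.2
      rw [heq2, hval] at heq1
      exact e1_ne_neg hd ((rot_pi_neg_e1 hd).symm.trans heq1)


end Statement
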